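/- arXiv:math/0312100 — 7 statements merged into one kernel-verified Lean document; each statement's English description precedes it below -/
import Mathlib

section
/- There exists a unique formal power series G(x,w) ∈ ℚ[[x,w]] satisfying the equation x·w·G_ww = w·(G_w)² + (1−x)·G_w − 1 (where G_w and G_ww denote the first and second formal partial derivatives of G with respect to w) together with the initial condition G(x,0) = −Σ_{a≥2} B_a/(a(a−1)) · x^a. -/
/-!
Write `D = G_w = ∑ dₙ(w) xⁿ`. The coefficient of `x⁰` in the equation says `w d₀² + d₀ = 1`,
solved by `d₀(w) = C(-w)` for the Catalan series `C = 1 + w C²`; the solution is unique because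
two solutions `s, t` satisfy `(s - t)(1 + w (s + t)) = 0` with a unit second factor. The
coefficient of `x^(m+1)` reads `(1 + 2 w d₀) d_{m+1} = w d_m' + d_m - w ∑_{k<m} d_{k+1} d_{m-k}`,
and as `1 + 2 w d₀` is a unit this determines `d_{m+1}` from the earlier coefficients. Finally
each coefficient `gₙ` of `G` is recovered from its derivative `dₙ` and its constant term, which
the initial condition prescribes.
-/

open PowerSeries

/-- The formal partial derivative with respect to the inner variable `w`
of an element of `ℚ⟦w⟧⟦x⟧` (outer variable `x`, inner variable `w`). -/
noncomputable def dw (F : PowerSeries (PowerSeries ℚ)) : PowerSeries (PowerSeries ℚ) :=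
  PowerSeries.mk fun n => d⁄dX ℚ (PowerSeries.coeff (R := PowerSeries ℚ) n F)

/-- The series `-∑_{a ≥ 2} B_a/(a(a-1)) xᵃ`, where `B_a` are the Bernoulli numbers
(convention `B_1 = -1/2`, i.e. generating function `x/(eˣ - 1)`). -/
noncomputable def icSeries : PowerSeries ℚ :=
  PowerSeries.mk fun a => if 2 ≤ a then -(bernoulli a / ((a : ℚ) * ((a : ℚ) - 1))) else 0

/-- `G ∈ ℚ⟦x,w⟧` (realized as `ℚ⟦w⟧⟦x⟧`, with `x` the outer and `w` the inner variable)
satisfies `x·w·G_ww = w·(G_w)² + (1-x)·G_w - 1` together with the initial condition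
`G(x,0) = -∑_{a≥2} B_a/(a(a-1)) xᵃ`. -/
def IsG (G : PowerSeries (PowerSeries ℚ)) : Prop :=
  PowerSeries.X * PowerSeries.C (R := PowerSeries ℚ) PowerSeries.X * dw (dw G) =
      PowerSeries.C (R := PowerSeries ℚ) PowerSeries.X * (dw G) ^ 2 +
        (1 - PowerSeries.X) * dw G - 1 ∧
  PowerSeries.map (PowerSeries.constantCoeff (R := ℚ)) G = icSeries

open Finset

theorem Nat.existsUnique_strongRecursion {α : Type*} [Nonempty α]
    (step : ℕ → (ℕ → α) → α) (hstep : ∀ n f g, (∀ m < n, f m = g m) → step n f = step n g) :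
    ∃! f : ℕ → α, ∀ n, f n = step n f := by
  let f : ℕ → α := Nat.strongRec fun n h =>
    step n fun m => if hm : m < n then h m hm else Classical.arbitrary α
  refine ⟨f, fun n => ?_, fun g hg => funext fun n => ?_⟩
  · rw [show f n = _ from Nat.strongRec_eq _ n]
    exact hstep _ _ _ fun m hm => dif_pos hm
  · induction n using Nat.strong_induction_on with
    | _ n ih =>
      rw [hg n, show f n = _ from Nat.strongRec_eq _ n]
      exact hstep _ _ _ fun m hm => by rw [ih m hm, dif_pos hm]

namespace PowerSeries

theorem existsUnique_forall_coeff_eq {R : Type*} [Semiring R]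
    (step : ℕ → (ℕ → R) → R) (hstep : ∀ n f g, (∀ m < n, f m = g m) → step n f = step n g) :
    ∃! φ : R⟦X⟧, ∀ n, coeff n φ = step n fun m => coeff m φ := by
  obtain ⟨f, hf, hf_unique⟩ := Nat.existsUnique_strongRecursion step hstep
  refine ⟨mk f, by simpa using hf, fun φ hφ => ext fun n => ?_⟩
  rw [coeff_mk, ← hf_unique _ hφ]

theorem exists_derivative_eq_and_constantCoeff_eq {k : Type*} [Field k] [CharZero k]
    (f : k⟦X⟧) (c : k) :
    ∃ g : k⟦X⟧, d⁄dX k g = f ∧ constantCoeff g = c := by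
  refine ⟨mk fun | 0 => c | n + 1 => coeff n f / (n + 1), ext fun n => ?_, by simp⟩
  rw [coeff_derivative, coeff_mk]
  field_simp

noncomputable def negCatalanSeries (R : Type*) [CommRing R] : R⟦X⟧ :=
  rescale (-1) (map (Nat.castRingHom R) catalanSeries)

theorem X_mul_negCatalanSeries_sq_add_self (R : Type*) [CommRing R] :
    X * negCatalanSeries R ^ 2 + negCatalanSeries R = 1 := by
  have h := congrArg (fun φ => rescale (-1 : R) (map (Nat.castRingHom R) φ))
    catalanSeries_sq_mul_X_add_one
  simp only [map_add, map_mul, map_pow, map_X, map_one, rescale_X, map_neg, neg_mul, one_mul] at h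
  rw [negCatalanSeries]
  linear_combination -h

theorem X_mul_sq_add_eq_one_iff {R : Type*} [CommRing R] (t : R⟦X⟧) :
    X * t ^ 2 + t = 1 ↔ t = negCatalanSeries R := by
  refine ⟨fun ht => ?_, fun ht => ht ▸ X_mul_negCatalanSeries_sq_add_self R⟩
  have hunit : IsUnit (X * (t + negCatalanSeries R) + 1) := by
    rw [isUnit_iff_constantCoeff]; simp
  have hfactor : (t - negCatalanSeries R) * (X * (t + negCatalanSeries R) + 1) = 0 := by
    linear_combination ht - X_mul_negCatalanSeries_sq_add_self R
  exact sub_eq_zero.mp ((hunit.mul_left_eq_zero).mp hfactor)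

end PowerSeries

def IsGw (D : ℚ⟦X⟧⟦X⟧) : Prop :=
  X * C X * dw D = C X * D ^ 2 + (1 - X) * D - 1

theorem sum_antidiagonal_succ_mul_eq {R : Type*} [CommSemiring R] (m : ℕ) (d : ℕ → R) :
    ∑ p ∈ antidiagonal (m + 1), d p.1 * d p.2 =
      2 * d 0 * d (m + 1) + ∑ k ∈ range m, d (k + 1) * d (m - k) := by
  rw [Nat.sum_antidiagonal_eq_sum_range_succ_mk, sum_range_succ', sum_range_succ]
  simp only [Nat.sub_self, Nat.sub_zero, Nat.add_sub_add_right]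
  ring

noncomputable def gwStep : ℕ → (ℕ → ℚ⟦X⟧) → ℚ⟦X⟧
  | 0, _ => negCatalanSeries ℚ
  | m + 1, d => (X * d⁄dX ℚ (d m) + d m - X * ∑ k ∈ range m, d (k + 1) * d (m - k)) *
      (1 + 2 * X * d 0)⁻¹

theorem gwStep_congr (n : ℕ) (d e : ℕ → ℚ⟦X⟧) (hde : ∀ m < n, d m = e m) :
    gwStep n d = gwStep n e := by
  rcases n with _ | m
  · rfl
  · have hsum : ∑ k ∈ range m, d (k + 1) * d (m - k) = ∑ k ∈ range m, e (k + 1) * e (m - k) :=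
      sum_congr rfl fun k hk => by
        rw [hde _ (by simpa using mem_range.mp hk), hde _ (by omega)]
    simp only [gwStep, hsum, hde m m.lt_succ_self, hde 0 m.succ_pos]

theorem isGw_iff_forall_coeff_eq_gwStep (D : ℚ⟦X⟧⟦X⟧) :
    IsGw D ↔ ∀ n, coeff n D = gwStep n fun m => coeff m D := by
  rw [IsGw, PowerSeries.ext_iff, ← Nat.and_forall_add_one,
    ← Nat.and_forall_add_one (p := fun n => coeff n D = _)]
  refine and_congr ?_ (forall_congr' fun m => ?_)
  · rw [gwStep, ← X_mul_sq_add_eq_one_iff, mul_assoc, coeff_zero_X_mul, map_sub, map_add,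
      coeff_C_mul, sq, coeff_mul, Nat.antidiagonal_zero, sum_singleton, sub_mul, one_mul, map_sub,
      coeff_zero_X_mul, sub_zero, coeff_one, if_pos rfl]
    constructor <;> intro h <;> linear_combination -h
  · rw [gwStep, eq_mul_inv_iff_mul_eq (by simp), mul_assoc, coeff_succ_X_mul, coeff_C_mul,
      map_sub, map_add, coeff_C_mul, sq, coeff_mul, sub_mul, one_mul, map_sub, coeff_succ_X_mul,
      coeff_one, if_neg m.succ_ne_zero, dw, coeff_mk,
      sum_antidiagonal_succ_mul_eq m fun i => coeff i D]
    constructor <;> intro h <;> linear_combination -h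

theorem existsUnique_isGw : ∃! D, IsGw D := by
  simp only [isGw_iff_forall_coeff_eq_gwStep]
  exact existsUnique_forall_coeff_eq gwStep gwStep_congr

theorem existsUnique_dw_eq_and_map_constantCoeff_eq (D : ℚ⟦X⟧⟦X⟧) (c : ℚ⟦X⟧) :
    ∃! G, dw G = D ∧ map constantCoeff G = c := by
  choose g hg_deriv hg_const using
    fun n => exists_derivative_eq_and_constantCoeff_eq (coeff n D) (coeff n c)
  refine ⟨mk g, ⟨ext fun n => ?_, ext fun n => ?_⟩, fun G ⟨hGD, hGc⟩ => ext fun n => ?_⟩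
  · rw [dw, coeff_mk, coeff_mk, hg_deriv]
  · rw [coeff_map, coeff_mk, hg_const]
  · refine derivative.ext ?_ ?_
    · rw [coeff_mk, hg_deriv, ← hGD, dw, coeff_mk]
    · rw [coeff_mk, hg_const, ← hGc, coeff_map]

/-- There exists a unique formal power series `G(x,w) ∈ ℚ⟦x,w⟧` satisfying
`x·w·G_ww = w·(G_w)² + (1-x)·G_w - 1` and `G(x,0) = -∑_{a≥2} B_a/(a(a-1)) xᵃ`. -/
theorem statement0 : ∃! G : PowerSeries (PowerSeries ℚ), IsG G := by
  obtain ⟨D, hD, hD_unique⟩ := existsUnique_isGw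
  obtain ⟨G, ⟨hGD, hGc⟩, hG_unique⟩ := existsUnique_dw_eq_and_map_constantCoeff_eq D icSeries
  exact ⟨G, ⟨hGD ▸ hD, hGc⟩, fun G' ⟨hG', hG'c⟩ => hG_unique G' ⟨hD_unique _ hG', hG'c⟩⟩
end

section
/- Let A₀(w) ∈ ℚ[[w]] be the power series obtained from G_w = ∂G/∂w by setting x = 0. Then A₀(w) = Σ_{n≥0} (−1)^n C_n w^n; in particular w·A₀(w)² + A₀(w) − 1 = 0 and (1 + 2w·A₀(w))² = 1 + 4w hold in ℚ[[w]]. -/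
/-! At `x = 0` the differential equation loses its derivative term and becomes the Catalan
equation `w·A₀² + A₀ = 1`. This equation has at most one solution in `ℚ⟦w⟧`, and the
Catalan generating function, evaluated at `-w`, is one. -/

open PowerSeries

namespace PowerSeries

variable {R : Type*} [CommRing R]

/-- The difference of two solutions is annihilated by the unit `1 + X·(A + B)`. -/
theorem eq_of_X_mul_sq_add_eq_one {A B : R⟦X⟧} (hA : X * A ^ 2 + A = 1)
    (hB : X * B ^ 2 + B = 1) : A = B := by
  have hunit : IsUnit (1 + X * (A + B)) := isUnit_iff_constantCoeff.mpr (by simp)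
  have hprod : (1 + X * (A + B)) * (A - B) = 0 := by linear_combination hA - hB
  exact sub_eq_zero.mp ((hunit.mul_right_eq_zero).mp hprod)

theorem rescale_neg_one_map_catalanSeries :
    rescale (-1 : R) (map (Nat.castRingHom R) catalanSeries) =
      mk fun n => (-1 : R) ^ n * catalan n := by
  ext n
  simp [coeff_rescale]

theorem X_mul_sq_add_eq_one_of_alternating_catalan :
    X * (mk fun n => (-1 : R) ^ n * catalan n) ^ 2 + (mk fun n => (-1 : R) ^ n * catalan n) =
      1 := by
  have h := congrArg (fun f => rescale (-1 : R) (map (Nat.castRingHom R) f))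
    catalanSeries_sq_mul_X_add_one
  simp only [map_add, map_mul, map_pow, map_one, map_neg, map_X, rescale_X,
    rescale_neg_one_map_catalanSeries] at h
  linear_combination -h

end PowerSeries

theorem IsG.X_mul_constantCoeff_dw_sq_add_eq_one {G : PowerSeries (PowerSeries ℚ)} (hG : IsG G) :
    X * constantCoeff (dw G) ^ 2 + constantCoeff (dw G) = 1 := by
  have h := congrArg constantCoeff hG.1
  simp only [map_mul, map_add, map_sub, map_pow, map_one, constantCoeff_X, constantCoeff_C,
    zero_mul, sub_zero, one_mul] at h
  linear_combination -h

/-- Let `A₀(w) ∈ ℚ⟦w⟧` be the power series obtained from `G_w` by setting `x = 0`.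
Then `A₀(w) = ∑ (-1)ⁿ Cₙ wⁿ` with `Cₙ` the Catalan numbers; in particular
`w·A₀² + A₀ - 1 = 0` and `(1 + 2w·A₀)² = 1 + 4w` in `ℚ⟦w⟧`. -/
theorem statement1 (G : PowerSeries (PowerSeries ℚ)) (hG : IsG G)
    (A₀ : PowerSeries ℚ)
    (hA₀ : A₀ = PowerSeries.constantCoeff (R := PowerSeries ℚ) (dw G)) :
    A₀ = PowerSeries.mk (fun n => (-1 : ℚ) ^ n * (catalan n : ℚ)) ∧
      PowerSeries.X * A₀ ^ 2 + A₀ - 1 = 0 ∧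
      (1 + 2 * PowerSeries.X * A₀) ^ 2 = 1 + 4 * PowerSeries.X := by
  have hquad : X * A₀ ^ 2 + A₀ = 1 := hA₀ ▸ hG.X_mul_constantCoeff_dw_sq_add_eq_one
  refine ⟨eq_of_X_mul_sq_add_eq_one hquad X_mul_sq_add_eq_one_of_alternating_catalan,
    sub_eq_zero.mpr hquad, ?_⟩
  linear_combination 4 * X * hquad
end

section
/- The formal power series G_w = ∂G/∂w ∈ ℚ[[x,w]] has the expansion G_w(x,w) = A₀(w) + x·R(w)^{−2} + Σ_{k≥1} Σ_{j=0}^{k} x^{k+1}·q_{k,j}·(−w)^j·R(w)^{−2j−k−2}, where A₀(w) = Σ_{n≥0} (−1)^n C_n w^n. -/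
/-!
Comparing coefficients of `xⁿ` turns the equation for `H = G_w` into `w·H₀² + H₀ = 1`, whose only
solution is the signed Catalan series `A₀`, and into
`(1 + 2w·H₀)·H_{n+1} = H_n + w·∂_w H_n - w·∑_{0<i≤n} H_i·H_{n+1-i}`.
Since `1 + 2w·A₀` squares to `1 + 4w`, it is `R`, a unit, so this recursion determines `H`, and it
suffices to check it for the claimed coefficients. Writing these as `R^{-k-2}·P_k(t)` with
`t = -w/R²` and `P_k(t) = ∑ⱼ q_{k,j} tʲ`, the identities `w·∂_w R^{-e} = 2e·t·R^{-e}` and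
`w·∂_w t = t + 4t²` turn the recursion into
`P_{k+1} = (1 + 2(k+2)t)·P_k + (t + 4t²)·P_k' + t·∑_{m≤k} P_m·P_{k-m}`,
which is the recursion defining `q_{k,j}` read coefficientwise.
-/

open PowerSeries Finset

/-- `q : ℕ → ℕ → ℤ` satisfies the defining recursion. -/
def IsQ (q : ℕ → ℕ → ℤ) : Prop :=
  q 0 0 = 1 ∧
  (∀ k j, k < j → q k j = 0) ∧
  (∀ k j, 1 ≤ k → j ≤ k →
    q k j = (2 * (k : ℤ) + 4 * (j : ℤ) - 2) * (if j = 0 then 0 else q (k - 1) (j - 1))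
      + ((j : ℤ) + 1) * q (k - 1) j
      + ∑ m ∈ Finset.range k, ∑ l ∈ Finset.range j, q m l * q (k - 1 - m) (j - 1 - l))

open Polynomial (aeval)

instance : CharZero ℚ⟦X⟧ := RingHom.charZero (constantCoeff (R := ℚ))

@[simp]
theorem PowerSeries.derivative_ofNat {A : Type*} [CommSemiring A] (n : ℕ) [n.AtLeastTwo] :
    d⁄dX A (ofNat(n) : A⟦X⟧) = 0 :=
  Derivation.map_natCast _ n

theorem PowerSeries.ne_zero_of_constantCoeff_ne_zero {A : Type*} [Semiring A] {a : A⟦X⟧}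
    (h : constantCoeff a ≠ 0) : a ≠ 0 := by
  rintro rfl
  simp at h

theorem Polynomial.coeff_X_mul_derivative {A : Type*} [Semiring A] (p : Polynomial A) (j : ℕ) :
    (Polynomial.X * Polynomial.derivative p).coeff j = j * p.coeff j := by
  rcases j with _ | j
  · simp
  · rw [Polynomial.coeff_X_mul, Polynomial.coeff_derivative, Nat.cast_comm]
    push_cast
    rfl

noncomputable def signedCatalan : ℚ⟦X⟧ := mk fun m => (-1 : ℚ) ^ m * (catalan m : ℚ)

theorem X_mul_signedCatalan_sq_add : X * signedCatalan ^ 2 + signedCatalan = 1 := by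
  ext n
  rcases n with _ | n
  · simp [signedCatalan]
  have hterm : ∀ p ∈ antidiagonal n, coeff p.1 signedCatalan * coeff p.2 signedCatalan
      = (-1 : ℚ) ^ n * ((catalan p.1 * catalan p.2 : ℕ) : ℚ) := by
    rintro ⟨a, b⟩ hab
    rw [HasAntidiagonal.mem_antidiagonal] at hab
    subst hab
    simp only [signedCatalan, coeff_mk]
    push_cast
    ring
  rw [map_add, coeff_succ_X_mul, pow_two, coeff_mul, sum_congr rfl hterm, ← mul_sum,
    ← Nat.cast_sum, ← catalan_succ']
  simp [signedCatalan, pow_succ]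

theorem eq_signedCatalan_of_X_mul_sq_add {a : ℚ⟦X⟧} (h : X * a ^ 2 + a = 1) :
    a = signedCatalan := by
  have hfac : (1 + X * (a + signedCatalan)) * (a - signedCatalan) = 0 := by
    linear_combination h - X_mul_signedCatalan_sq_add
  refine sub_eq_zero.mp ((mul_eq_zero.mp hfac).resolve_left ?_)
  exact ne_zero_of_constantCoeff_ne_zero (by simp)

noncomputable def sqrtSeries : ℚ⟦X⟧ := 1 + 2 * X * signedCatalan

theorem sqrtSeries_sq : sqrtSeries ^ 2 = 1 + 4 * X := by
  unfold sqrtSeries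
  linear_combination 4 * X * X_mul_signedCatalan_sq_add

theorem constantCoeff_sqrtSeries : constantCoeff sqrtSeries = 1 := by
  simp [sqrtSeries]

theorem eq_sqrtSeries {R : ℚ⟦X⟧} (h0 : constantCoeff R = 1) (h2 : R ^ 2 = 1 + 4 * X) :
    R = sqrtSeries := by
  have hfac : (R + sqrtSeries) * (R - sqrtSeries) = 0 := by
    linear_combination h2 - sqrtSeries_sq
  refine sub_eq_zero.mp ((mul_eq_zero.mp hfac).resolve_left ?_)
  exact ne_zero_of_constantCoeff_ne_zero (by simp [h0, constantCoeff_sqrtSeries])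

theorem sqrtSeries_ne_zero : sqrtSeries ≠ 0 :=
  ne_zero_of_constantCoeff_ne_zero (by simp [constantCoeff_sqrtSeries])

theorem sqrtSeries_mul_inv : sqrtSeries * sqrtSeries⁻¹ = 1 :=
  PowerSeries.mul_inv_cancel _ (by simp [constantCoeff_sqrtSeries])

theorem derivative_sqrtSeries : d⁄dX ℚ sqrtSeries = 2 * sqrtSeries⁻¹ := by
  have h := congrArg (d⁄dX ℚ) sqrtSeries_sq
  simp only [Derivation.leibniz_pow, Nat.add_one_sub_one, pow_one, smul_eq_mul, nsmul_eq_mul,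
    Nat.cast_ofNat, map_add, Derivation.map_one_eq_zero, Derivation.leibniz, derivative_X, mul_one,
    derivative_ofNat, mul_zero, add_zero, zero_add] at h
  have h' : sqrtSeries * d⁄dX ℚ sqrtSeries = 2 :=
    mul_left_cancel₀ two_ne_zero (by linear_combination h)
  linear_combination sqrtSeries⁻¹ * h' - d⁄dX ℚ sqrtSeries * sqrtSeries_mul_inv

theorem X_mul_derivative_signedCatalan :
    X * d⁄dX ℚ signedCatalan = sqrtSeries⁻¹ - signedCatalan := by
  have h : d⁄dX ℚ (1 + 2 * X * signedCatalan) = 2 * sqrtSeries⁻¹ := derivative_sqrtSeries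
  simp only [map_add, Derivation.map_one_eq_zero, Derivation.leibniz, smul_eq_mul, derivative_X,
    mul_one, derivative_ofNat, mul_zero, add_zero, zero_add] at h
  exact mul_left_cancel₀ two_ne_zero (by linear_combination h)

noncomputable def tSeries : ℚ⟦X⟧ := -X * sqrtSeries⁻¹ ^ 2

theorem derivative_sqrtSeries_inv : d⁄dX ℚ sqrtSeries⁻¹ = -2 * sqrtSeries⁻¹ ^ 3 := by
  rw [derivative_inv', derivative_sqrtSeries]
  ring

theorem X_mul_derivative_sqrtSeries_inv_pow (e : ℕ) :
    X * d⁄dX ℚ (sqrtSeries⁻¹ ^ e) = 2 * (e : ℚ⟦X⟧) * tSeries * sqrtSeries⁻¹ ^ e := by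
  rcases e with _ | e
  · simp
  rw [Derivation.leibniz_pow, derivative_sqrtSeries_inv, tSeries]
  simp only [add_tsub_cancel_right, nsmul_eq_mul, smul_eq_mul]
  push_cast
  ring

theorem X_mul_derivative_tSeries : X * d⁄dX ℚ tSeries = tSeries + 4 * tSeries ^ 2 := by
  have h := X_mul_derivative_sqrtSeries_inv_pow 2
  rw [tSeries, neg_mul, map_neg, Derivation.leibniz, derivative_X, smul_eq_mul, smul_eq_mul]
  rw [tSeries] at h
  linear_combination (-X) * h

theorem X_mul_derivative_aeval_tSeries (p : Polynomial ℚ) :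
    X * d⁄dX ℚ (aeval tSeries p)
      = aeval tSeries ((Polynomial.X + 4 * Polynomial.X ^ 2) * Polynomial.derivative p) := by
  rw [Derivation.map_aeval, smul_eq_mul, mul_left_comm, X_mul_derivative_tSeries]
  simp only [map_mul, map_add, map_pow, Polynomial.aeval_X, map_ofNat]
  ring

theorem X_mul_derivative_sqrtSeries_inv_pow_mul_aeval (e : ℕ) (p : Polynomial ℚ) :
    X * d⁄dX ℚ (sqrtSeries⁻¹ ^ e * aeval tSeries p)
      = sqrtSeries⁻¹ ^ e * aeval tSeries
          (2 * (e : Polynomial ℚ) * Polynomial.X * p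
            + (Polynomial.X + 4 * Polynomial.X ^ 2) * Polynomial.derivative p) := by
  have hp := X_mul_derivative_aeval_tSeries p
  have he := X_mul_derivative_sqrtSeries_inv_pow e
  rw [Derivation.leibniz, smul_eq_mul, smul_eq_mul, map_add, ← hp]
  simp only [map_mul, map_natCast, Polynomial.aeval_X, map_ofNat]
  linear_combination aeval tSeries p * he

noncomputable def qPoly (q : ℕ → ℕ → ℤ) (k : ℕ) : Polynomial ℚ :=
  ∑ j ∈ range (k + 1), Polynomial.C (q k j : ℚ) * Polynomial.X ^ j

theorem coeff_qPoly {q : ℕ → ℕ → ℤ} (hq : ∀ k j, k < j → q k j = 0) (k j : ℕ) :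
    (qPoly q k).coeff j = q k j := by
  simp only [qPoly, Polynomial.finsetSum_coeff, Polynomial.coeff_C_mul_X_pow, sum_ite_eq,
    mem_range]
  split_ifs with h
  · rfl
  · simp [hq k j (by omega)]

theorem IsQ.qPoly_zero {q : ℕ → ℕ → ℤ} (hq : IsQ q) : qPoly q 0 = 1 := by
  simp [qPoly, hq.1]

theorem IsQ.succ_eq {q : ℕ → ℕ → ℤ} (hq : IsQ q) (k j : ℕ) :
    q (k + 1) j = (2 * k + 4 * j) * (if j = 0 then 0 else q k (j - 1)) + (j + 1) * q k j
      + ∑ m ∈ range (k + 1), ∑ l ∈ range j, q m l * q (k - m) (j - 1 - l) := by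
  obtain ⟨-, hzero, hrec⟩ := hq
  by_cases hj : j ≤ k + 1
  · rw [hrec (k + 1) j (by omega) hj]
    simp only [add_tsub_cancel_right, Nat.cast_add, Nat.cast_one]
    ring
  have hconv : ∀ m ∈ range (k + 1), ∀ l ∈ range j, q m l * q (k - m) (j - 1 - l) = 0 := by
    intro m hm l _
    rw [mem_range] at hm
    by_cases hl : m < l
    · rw [hzero m l hl, zero_mul]
    · rw [hzero (k - m) (j - 1 - l) (by omega), mul_zero]
  rw [hzero _ _ (by omega), hzero k j (by omega), if_neg (by omega), hzero k (j - 1) (by omega),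
    sum_eq_zero fun m hm => sum_eq_zero (hconv m hm)]
  ring

theorem IsQ.qPoly_succ {q : ℕ → ℕ → ℤ} (hq : IsQ q) (k : ℕ) :
    qPoly q (k + 1) = qPoly q k + (2 * ((k + 2 : ℕ) : Polynomial ℚ) * Polynomial.X * qPoly q k
      + (Polynomial.X + 4 * Polynomial.X ^ 2) * Polynomial.derivative (qPoly q k))
      + Polynomial.X * ∑ m ∈ range (k + 1), qPoly q m * qPoly q (k - m) := by
  set P := qPoly q k
  rw [show P + (2 * ((k + 2 : ℕ) : Polynomial ℚ) * Polynomial.X * P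
      + (Polynomial.X + 4 * Polynomial.X ^ 2) * Polynomial.derivative P)
      + Polynomial.X * ∑ m ∈ range (k + 1), qPoly q m * qPoly q (k - m)
      = P + Polynomial.X * Polynomial.derivative P
        + Polynomial.X * (((2 * k + 4 : ℕ) : Polynomial ℚ) * P
          + 4 * (Polynomial.X * Polynomial.derivative P)
          + ∑ m ∈ range (k + 1), qPoly q m * qPoly q (k - m)) by push_cast; ring]
  have hc := coeff_qPoly hq.2.1
  ext j
  rcases j with _ | j
  · simp [P, hc, hq.succ_eq k 0]
  · rw [hc, hq.succ_eq k (j + 1)]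
    rw [Polynomial.coeff_add, Polynomial.coeff_add, Polynomial.coeff_X_mul, Polynomial.coeff_X_mul,
      Polynomial.coeff_add, Polynomial.coeff_add, Polynomial.coeff_natCast_mul,
      Polynomial.coeff_ofNat_mul, Polynomial.coeff_X_mul_derivative, Polynomial.finsetSum_coeff]
    simp only [P, hc, Polynomial.coeff_derivative, Polynomial.coeff_mul,
      Finset.Nat.sum_antidiagonal_eq_sum_range_succ_mk]
    simp only [Nat.add_one_ne_zero, if_false, add_tsub_cancel_right, Nat.succ_eq_add_one]
    push_cast
    ring

noncomputable def expansionCoeff (q : ℕ → ℕ → ℤ) : ℕ → ℚ⟦X⟧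
  | 0 => signedCatalan
  | k + 1 => sqrtSeries⁻¹ ^ (k + 2) * aeval tSeries (qPoly q k)

theorem sqrtSeries_mul_inv_pow_succ (e : ℕ) :
    sqrtSeries * sqrtSeries⁻¹ ^ (e + 1) = sqrtSeries⁻¹ ^ e := by
  rw [pow_succ', ← mul_assoc, sqrtSeries_mul_inv, one_mul]

theorem X_mul_expansionCoeff_mul (q : ℕ → ℕ → ℤ) {i k : ℕ} (hi : i ≤ k) :
    X * (expansionCoeff q (i + 1) * expansionCoeff q (k - i + 1))
      = -(tSeries * sqrtSeries⁻¹ ^ (k + 2) * aeval tSeries (qPoly q i * qPoly q (k - i))) := by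
  have hpow : sqrtSeries⁻¹ ^ (i + 2) * sqrtSeries⁻¹ ^ (k - i + 2)
      = sqrtSeries⁻¹ ^ 2 * sqrtSeries⁻¹ ^ (k + 2) := by
    rw [← pow_add, ← pow_add]
    congr 1
    omega
  simp only [expansionCoeff, map_mul]
  generalize aeval tSeries (qPoly q i) = a
  generalize aeval tSeries (qPoly q (k - i)) = b
  rw [tSeries]
  linear_combination X * a * b * hpow

theorem IsQ.sqrtSeries_mul_expansionCoeff_succ {q : ℕ → ℕ → ℤ} (hq : IsQ q) (n : ℕ) :
    sqrtSeries * expansionCoeff q (n + 1)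
      = expansionCoeff q n + X * d⁄dX ℚ (expansionCoeff q n)
        - X * ∑ i ∈ range n, expansionCoeff q (i + 1) * expansionCoeff q (n - i) := by
  rcases n with _ | k
  · simp only [expansionCoeff, hq.qPoly_zero, map_one, mul_one, sqrtSeries_mul_inv_pow_succ,
      X_mul_derivative_signedCatalan, range_zero, sum_empty, mul_zero]
    ring
  have hconv : X * ∑ i ∈ range (k + 1), expansionCoeff q (i + 1) * expansionCoeff q (k + 1 - i)
      = -(tSeries * sqrtSeries⁻¹ ^ (k + 2)
          * aeval tSeries (∑ i ∈ range (k + 1), qPoly q i * qPoly q (k - i))) := by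
    rw [mul_sum, map_sum, mul_sum, ← sum_neg_distrib]
    refine sum_congr rfl fun i hi => ?_
    rw [mem_range] at hi
    rw [show k + 1 - i = k - i + 1 by omega]
    exact X_mul_expansionCoeff_mul q (by omega)
  have hder := X_mul_derivative_sqrtSeries_inv_pow_mul_aeval (k + 2) (qPoly q k)
  rw [hconv]
  simp only [expansionCoeff]
  rw [hder, ← mul_assoc, show k + 1 + 2 = k + 2 + 1 from rfl, sqrtSeries_mul_inv_pow_succ,
    hq.qPoly_succ]
  simp only [map_add, map_mul, Polynomial.aeval_X]
  ring

theorem inv_pow_mul_aeval_qPoly (q : ℕ → ℕ → ℤ) (n : ℕ) :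
    sqrtSeries⁻¹ ^ (n + 2) * aeval tSeries (qPoly q n)
      = ∑ j ∈ range (n + 1),
          C (q n j : ℚ) * ((-X) ^ j * sqrtSeries⁻¹ ^ (2 * j + n + 2)) := by
  simp only [qPoly, map_sum, mul_sum, map_mul, Polynomial.aeval_C, map_pow, Polynomial.aeval_X]
  refine sum_congr rfl fun j _ => ?_
  rw [tSeries, mul_pow, ← pow_mul, algebraMap_eq]
  ring

def IsRiccati (H : PowerSeries (PowerSeries ℚ)) : Prop :=
  PowerSeries.X * PowerSeries.C (R := PowerSeries ℚ) PowerSeries.X * dw H =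
    PowerSeries.C (R := PowerSeries ℚ) PowerSeries.X * H ^ 2 + (1 - PowerSeries.X) * H - 1

theorem IsRiccati.coeff_zero {H : PowerSeries (PowerSeries ℚ)} (h : IsRiccati H) :
    X * coeff 0 H ^ 2 + coeff 0 H = 1 := by
  have h0 := congrArg (coeff 0) h
  rw [mul_comm X, mul_assoc, coeff_C_mul, coeff_zero_X_mul, mul_zero, map_sub, map_add,
    coeff_C_mul, sub_mul, one_mul, map_sub, coeff_zero_X_mul, coeff_one, if_pos rfl] at h0
  simp only [pow_two, coeff_mul, Finset.Nat.antidiagonal_zero, sum_singleton] at h0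
  linear_combination -h0

theorem IsRiccati.coeff_succ {H : PowerSeries (PowerSeries ℚ)} (h : IsRiccati H) (n : ℕ) :
    (1 + 2 * X * coeff 0 H) * coeff (n + 1) H
      = coeff n H + X * d⁄dX ℚ (coeff n H)
        - X * ∑ i ∈ range n, coeff (i + 1) H * coeff (n - i) H := by
  have hn := congrArg (coeff (n + 1)) h
  rw [mul_comm X, mul_assoc, coeff_C_mul, coeff_succ_X_mul, dw, coeff_mk, map_sub, map_add,
    coeff_C_mul, sub_mul, one_mul, map_sub, coeff_succ_X_mul, coeff_one, if_neg n.succ_ne_zero,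
    pow_two, coeff_mul, Finset.Nat.sum_antidiagonal_eq_sum_range_succ_mk, sum_range_succ',
    sum_range_succ] at hn
  simp only [Nat.succ_sub_succ_eq_sub, Nat.sub_self, Nat.sub_zero] at hn
  linear_combination -hn

theorem IsRiccati.eq_mk_expansionCoeff {H : PowerSeries (PowerSeries ℚ)} (h : IsRiccati H)
    {q : ℕ → ℕ → ℤ} (hq : IsQ q) : H = mk (expansionCoeff q) := by
  have h0 : coeff 0 H = signedCatalan := eq_signedCatalan_of_X_mul_sq_add h.coeff_zero
  ext1 n
  induction n using Nat.strong_induction_on with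
  | _ n ih =>
  rw [coeff_mk]
  rcases n with _ | n
  · exact h0
  have hsum : ∑ i ∈ range n, coeff (i + 1) H * coeff (n - i) H
      = ∑ i ∈ range n, expansionCoeff q (i + 1) * expansionCoeff q (n - i) :=
    sum_congr rfl fun i hi => by
      rw [mem_range] at hi
      rw [ih (i + 1) (by omega), ih (n - i) (by omega), coeff_mk, coeff_mk]
  have hrec := h.coeff_succ n
  rw [h0, ih n (by omega), coeff_mk, hsum] at hrec
  exact mul_left_cancel₀ sqrtSeries_ne_zero
    (hrec.trans (hq.sqrtSeries_mul_expansionCoeff_succ n).symm)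

/-- The expansion
`G_w(x,w) = A₀(w) + x·R(w)⁻² + ∑_{k≥1} ∑_{j=0}^{k} x^{k+1}·q_{k,j}·(-w)ʲ·R(w)^{-2j-k-2}`,
where `A₀(w) = ∑ (-1)ⁿ Cₙ wⁿ` and `R(w)` is the unique square root of `1+4w` with
constant term `1`.  (The equality is an equality in `ℚ⟦w⟧⟦x⟧`; the right-hand
side is the power series in `x` whose coefficients are the indicated elements of
`ℚ⟦w⟧`, negative powers of `R` being powers of its inverse.) -/
theorem statement3 (G : PowerSeries (PowerSeries ℚ)) (hG : IsG G)
    (q : ℕ → ℕ → ℤ) (hq : IsQ q)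
    (R : PowerSeries ℚ) (hR0 : PowerSeries.constantCoeff (R := ℚ) R = 1)
    (hR2 : R ^ 2 = 1 + 4 * PowerSeries.X) :
    dw G = PowerSeries.mk fun n =>
      match n with
      | 0 => PowerSeries.mk fun m => (-1 : ℚ) ^ m * (catalan m : ℚ)
      | 1 => (R⁻¹) ^ 2
      | (k + 2) => ∑ j ∈ Finset.range (k + 2),
          PowerSeries.C (R := ℚ) ((q (k + 1) j : ℚ)) *
            ((-PowerSeries.X) ^ j * (R⁻¹) ^ (2 * j + (k + 1) + 2)) := by
  obtain rfl := eq_sqrtSeries hR0 hR2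
  rw [IsRiccati.eq_mk_expansionCoeff hG.1 hq]
  ext1 n
  rw [coeff_mk, coeff_mk]
  rcases n with _ | _ | k
  · rfl
  · simp [expansionCoeff, hq.qPoly_zero]
  · exact inv_pow_mul_aeval_qPoly q (k + 1)
end

section
/- Define Q(x,u) := Σ_{k≥0} x^k·R(u)^k·( Σ_{j=0}^{k} q_{k,j}·u^j ) ∈ ℚ[[x,u]]. Then Q satisfies the functional equation Q = 1 + x·R(u)·( (1+4u)·∂(u·Q)/∂u + u·Q² ), and moreover Q is the unique formal power series in ℚ[[x,u]] satisfying this equation. -/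
/-!
Write `Q = ∑ₖ xᵏ Rᵏ Pₖ` with `Pₖ = ∑ⱼ q_{k,j} uʲ`. The coefficient of `xⁿ⁺¹` in the right-hand side
of the functional equation only involves the coefficients of `x⁰, …, xⁿ`, which gives uniqueness by
induction. For existence, `R² = 1 + 4u` gives `R R' = 2`, hence `(1 + 4u)(Rⁿ)' = 2n Rⁿ`, and the
coefficient comparison becomes `Rⁿ⁺¹` times
`Pₙ₊₁ = (1 + 4u)(u Pₙ)' + 2n u Pₙ + u ∑_{i+j=n} Pᵢ Pⱼ`,
which is the recursion for `q` read off coefficientwise.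
-/

open PowerSeries Finset

/-- The formal partial derivative with respect to the inner variable `u`
of an element of `ℚ⟦u⟧⟦x⟧` (outer variable `x`, inner variable `u`). -/
noncomputable def du (F : PowerSeries (PowerSeries ℚ)) : PowerSeries (PowerSeries ℚ) :=
  PowerSeries.mk fun n => d⁄dX ℚ (PowerSeries.coeff (R := PowerSeries ℚ) n F)

/-- `Q(x,u) := ∑_{k≥0} xᵏ·R(u)ᵏ·(∑_{j=0}^{k} q_{k,j} uʲ) ∈ ℚ⟦x,u⟧`, realized in
`ℚ⟦u⟧⟦x⟧` as the series in `x` with the indicated coefficients in `ℚ⟦u⟧`. -/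
noncomputable def Qser (q : ℕ → ℕ → ℤ) (R : PowerSeries ℚ) :
    PowerSeries (PowerSeries ℚ) :=
  PowerSeries.mk fun k =>
    R ^ k * ∑ j ∈ Finset.range (k + 1), PowerSeries.C (R := ℚ) ((q k j : ℚ)) * PowerSeries.X ^ j

noncomputable def qRow (q : ℕ → ℕ → ℤ) (k : ℕ) : ℚ⟦X⟧ :=
  mk fun j => (q k j : ℚ)

namespace IsQ

variable {q : ℕ → ℕ → ℤ}

theorem succ_eq_s4 (hq : IsQ q) (n j : ℕ) :
    q (n + 1) j = (2 * (n : ℤ) + 4 * j) * (if j = 0 then 0 else q n (j - 1))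
      + ((j : ℤ) + 1) * q n j
      + ∑ m ∈ range (n + 1), ∑ l ∈ range j, q m l * q (n - m) (j - 1 - l) := by
  obtain ⟨vanish, rec⟩ := hq.2
  rcases le_or_gt j (n + 1) with hj | hj
  · rw [rec (n + 1) j (by omega) hj, Nat.add_sub_cancel]
    push_cast
    ring
  · have hsum : ∑ m ∈ range (n + 1), ∑ l ∈ range j, q m l * q (n - m) (j - 1 - l) = 0 := by
      refine sum_eq_zero fun m hm => sum_eq_zero fun l hl => ?_
      rw [mem_range] at hm hl
      rcases le_or_gt l m with hlm | hlm
      · rw [vanish (n - m) (j - 1 - l) (by omega), mul_zero]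
      · rw [vanish m l hlm, zero_mul]
    rw [hsum, vanish (n + 1) j hj, vanish n j (by omega), if_neg (by omega),
      vanish n (j - 1) (by omega)]
    ring

theorem sum_range_eq_qRow (hq : IsQ q) (k : ℕ) :
    ∑ j ∈ range (k + 1), C (q k j : ℚ) * X ^ j = qRow q k := by
  ext j
  simp only [map_sum, coeff_C_mul_X_pow, sum_ite_eq, mem_range, qRow, coeff_mk]
  split_ifs with hj
  · rfl
  · rw [hq.2.1 k j (by omega), Int.cast_zero]

theorem qRow_zero (hq : IsQ q) : qRow q 0 = 1 := by
  ext j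
  rcases j with _ | j
  · simp [qRow, hq.1]
  · simp [qRow, hq.2.1 0 (j + 1) (by omega), coeff_one]

theorem qRow_succ (hq : IsQ q) (n : ℕ) :
    qRow q (n + 1) = (1 + 4 * X) * d⁄dX ℚ (X * qRow q n) + 2 * (n : ℚ⟦X⟧) * X * qRow q n
      + X * ∑ p ∈ antidiagonal n, qRow q p.1 * qRow q p.2 := by
  set D := d⁄dX ℚ (X * qRow q n)
  set S := ∑ p ∈ antidiagonal n, qRow q p.1 * qRow q p.2
  have hD (j : ℕ) : coeff j D = (j + 1) * q n j := by
    rw [coeff_derivative, coeff_succ_X_mul, qRow, coeff_mk]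
    ring
  have hS (j : ℕ) : coeff j S =
      ∑ m ∈ range (n + 1), ∑ l ∈ range (j + 1), (q m l * q (n - m) (j - l) : ℚ) := by
    simp only [S, map_sum, coeff_mul, qRow, coeff_mk, Nat.sum_antidiagonal_eq_sum_range_succ_mk]
  have hrhs : (1 + 4 * X) * D + 2 * (n : ℚ⟦X⟧) * X * qRow q n + X * S
      = D + X * (C 4 * D + C (2 * n : ℚ) * qRow q n + S) := by
    simp only [map_mul, map_ofNat, map_natCast]
    ring
  rw [hrhs]
  ext j
  have h := congrArg (Int.cast : ℤ → ℚ) (hq.succ_eq_s4 n j)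
  push_cast at h
  rcases j with _ | j
  · rw [map_add, coeff_zero_X_mul, add_zero, hD]
    simp [qRow, h]
  · simp only [map_add, coeff_succ_X_mul, coeff_C_mul, hD, hS, qRow, coeff_mk, h]
    simp only [Nat.cast_add, Nat.cast_one, Nat.add_eq_zero_iff, one_ne_zero, and_false,
      if_false, add_tsub_cancel_right]
    ring

end IsQ

section SqrtOneAddFourX

variable {R : ℚ⟦X⟧}

theorem mul_derivative_eq_two_of_sq_eq (hR2 : R ^ 2 = 1 + 4 * X) : R * d⁄dX ℚ R = 2 := by
  have h := congrArg (d⁄dX ℚ) hR2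
  have h4 : d⁄dX ℚ (1 + 4 * X : ℚ⟦X⟧) = 4 := by
    rw [← map_ofNat C 4]
    simp
  have h2 : (2 : ℚ⟦X⟧) ≠ 0 := fun h0 => by
    have := congrArg (constantCoeff (R := ℚ)) h0
    rw [map_ofNat, map_zero] at this
    norm_num at this
  rw [derivative_pow, h4] at h
  apply mul_left_cancel₀ h2
  linear_combination h

theorem one_add_four_X_mul_derivative_pow_of_sq_eq (hR2 : R ^ 2 = 1 + 4 * X) (m : ℕ) :
    (1 + 4 * X) * d⁄dX ℚ (R ^ m) = 2 * (m : ℚ⟦X⟧) * R ^ m := by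
  induction m with
  | zero => simp
  | succ m ih =>
    rw [pow_succ, Derivation.leibniz]
    simp only [smul_eq_mul]
    push_cast
    linear_combination R * ih - R ^ m * d⁄dX ℚ R * hR2
      + R ^ (m + 1) * mul_derivative_eq_two_of_sq_eq hR2

end SqrtOneAddFourX

noncomputable def funcEqRHS (R : ℚ⟦X⟧) (F : ℚ⟦X⟧⟦X⟧) : ℚ⟦X⟧⟦X⟧ :=
  1 + X * C R * (C (1 + 4 * X) * du (C X * F) + C X * F ^ 2)

section FunctionalEquation

variable (R : ℚ⟦X⟧) (F : ℚ⟦X⟧⟦X⟧)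

theorem coeff_zero_funcEqRHS : coeff 0 (funcEqRHS R F) = 1 := by
  rw [funcEqRHS, map_add, mul_assoc, coeff_zero_X_mul, coeff_zero_one, add_zero]

theorem coeff_succ_funcEqRHS (n : ℕ) :
    coeff (n + 1) (funcEqRHS R F) = R * ((1 + 4 * X) * d⁄dX ℚ (X * coeff n F)
      + X * ∑ p ∈ antidiagonal n, coeff p.1 F * coeff p.2 F) := by
  rw [funcEqRHS, map_add, mul_assoc, coeff_succ_X_mul, coeff_one, if_neg n.succ_ne_zero, zero_add,
    coeff_C_mul, map_add, coeff_C_mul, coeff_C_mul, du, coeff_mk, coeff_C_mul, sq, coeff_mul]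

variable {R F}

theorem eq_of_eq_funcEqRHS {G : ℚ⟦X⟧⟦X⟧} (hF : F = funcEqRHS R F) (hG : G = funcEqRHS R G) :
    F = G := by
  ext k : 1
  induction k using Nat.strong_induction_on with
  | _ k ih =>
    rcases k with _ | n
    · rw [hF, hG, coeff_zero_funcEqRHS, coeff_zero_funcEqRHS]
    · have hsum : ∑ p ∈ antidiagonal n, coeff p.1 F * coeff p.2 F
          = ∑ p ∈ antidiagonal n, coeff p.1 G * coeff p.2 G := by
        refine sum_congr rfl fun p hp => ?_
        rw [HasAntidiagonal.mem_antidiagonal] at hp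
        rw [ih p.1 (by omega), ih p.2 (by omega)]
      rw [hF, hG, coeff_succ_funcEqRHS, coeff_succ_funcEqRHS, ih n n.lt_succ_self, hsum]

end FunctionalEquation

theorem IsQ.pow_succ_mul_qRow_succ {q : ℕ → ℕ → ℤ} (hq : IsQ q) {R : ℚ⟦X⟧}
    (hR2 : R ^ 2 = 1 + 4 * X) (n : ℕ) :
    R ^ (n + 1) * qRow q (n + 1) = R * ((1 + 4 * X) * d⁄dX ℚ (X * (R ^ n * qRow q n))
      + X * ∑ p ∈ antidiagonal n, R ^ p.1 * qRow q p.1 * (R ^ p.2 * qRow q p.2)) := by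
  have hsum : ∑ p ∈ antidiagonal n, R ^ p.1 * qRow q p.1 * (R ^ p.2 * qRow q p.2)
      = R ^ n * ∑ p ∈ antidiagonal n, qRow q p.1 * qRow q p.2 := by
    rw [mul_sum]
    refine sum_congr rfl fun p hp => ?_
    rw [← HasAntidiagonal.mem_antidiagonal.mp hp, pow_add]
    ring
  have hderiv : d⁄dX ℚ (X * (R ^ n * qRow q n))
      = R ^ n * d⁄dX ℚ (X * qRow q n) + X * qRow q n * d⁄dX ℚ (R ^ n) := by
    rw [mul_left_comm, Derivation.leibniz, smul_eq_mul, smul_eq_mul]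
  rw [hsum, hderiv, hq.qRow_succ n]
  linear_combination -(R * X * qRow q n) * one_add_four_X_mul_derivative_pow_of_sq_eq hR2 n

theorem IsQ.coeff_Qser {q : ℕ → ℕ → ℤ} (hq : IsQ q) (R : ℚ⟦X⟧) (k : ℕ) :
    coeff k (Qser q R) = R ^ k * qRow q k := by
  rw [Qser, coeff_mk, hq.sum_range_eq_qRow]

theorem IsQ.Qser_eq_funcEqRHS {q : ℕ → ℕ → ℤ} (hq : IsQ q) {R : ℚ⟦X⟧}
    (hR2 : R ^ 2 = 1 + 4 * X) : Qser q R = funcEqRHS R (Qser q R) := by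
  ext k : 1
  rcases k with _ | n
  · rw [coeff_zero_funcEqRHS, hq.coeff_Qser, pow_zero, one_mul, hq.qRow_zero]
  · simp only [coeff_succ_funcEqRHS, hq.coeff_Qser]
    exact hq.pow_succ_mul_qRow_succ hR2 n

theorem statement4_general (q : ℕ → ℕ → ℤ) (hq : IsQ q)
    (R : PowerSeries ℚ)
    (hR2 : R ^ 2 = 1 + 4 * PowerSeries.X) :
    (Qser q R = 1 + PowerSeries.X * PowerSeries.C (R := PowerSeries ℚ) R *
        (PowerSeries.C (R := PowerSeries ℚ) (1 + 4 * PowerSeries.X) *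
            du (PowerSeries.C (R := PowerSeries ℚ) PowerSeries.X * Qser q R) +
          PowerSeries.C (R := PowerSeries ℚ) PowerSeries.X * (Qser q R) ^ 2)) ∧
    ∀ Q' : PowerSeries (PowerSeries ℚ),
      (Q' = 1 + PowerSeries.X * PowerSeries.C (R := PowerSeries ℚ) R *
          (PowerSeries.C (R := PowerSeries ℚ) (1 + 4 * PowerSeries.X) *
              du (PowerSeries.C (R := PowerSeries ℚ) PowerSeries.X * Q') +
            PowerSeries.C (R := PowerSeries ℚ) PowerSeries.X * Q' ^ 2)) →
      Q' = Qser q R :=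
  ⟨hq.Qser_eq_funcEqRHS hR2, fun _ hQ' => eq_of_eq_funcEqRHS hQ' (hq.Qser_eq_funcEqRHS hR2)⟩

/-- `Q` satisfies `Q = 1 + x·R(u)·((1+4u)·∂(u·Q)/∂u + u·Q²)`, and it is the unique
formal power series in `ℚ⟦x,u⟧` satisfying this equation. Here `R(u)` is the unique
square root of `1+4u` with constant term `1`. -/
theorem statement4 (q : ℕ → ℕ → ℤ) (hq : IsQ q)
    (R : PowerSeries ℚ) (hR0 : PowerSeries.constantCoeff (R := ℚ) R = 1)
    (hR2 : R ^ 2 = 1 + 4 * PowerSeries.X) :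
    (Qser q R = 1 + PowerSeries.X * PowerSeries.C (R := PowerSeries ℚ) R *
        (PowerSeries.C (R := PowerSeries ℚ) (1 + 4 * PowerSeries.X) *
            du (PowerSeries.C (R := PowerSeries ℚ) PowerSeries.X * Qser q R) +
          PowerSeries.C (R := PowerSeries ℚ) PowerSeries.X * (Qser q R) ^ 2)) ∧
    ∀ Q' : PowerSeries (PowerSeries ℚ),
      (Q' = 1 + PowerSeries.X * PowerSeries.C (R := PowerSeries ℚ) R *
          (PowerSeries.C (R := PowerSeries ℚ) (1 + 4 * PowerSeries.X) *
              du (PowerSeries.C (R := PowerSeries ℚ) PowerSeries.X * Q') +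
            PowerSeries.C (R := PowerSeries ℚ) PowerSeries.X * Q' ^ 2)) →
      Q' = Qser q R :=
  statement4_general q hq R hR2
end

section
/- For any formal power series g ∈ ℚ[[w]] and any integer d ≥ 0, the coefficient of w^d in g(w) equals (−1)^d times the coefficient of u^d in (1+4u)^{d−1}·g(−u·(1+4u)^{−1}), where the substitution is well defined since −u·(1+4u)^{−1} has zero constant term, and (1+4u)^{d−1} denotes the (d−1)-st power of the unit 1+4u in ℚ[[u]] (its inverse when d = 0). -/
/-! The substitution `w = -u/(1+4u)` is inverted by `u = -w/(1+4w)`, and the identity is the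
corresponding case of Lagrange inversion. Concretely, `[u^d] (1+4u)^(d-1) g(h)` is linear in `g`,
and on `g = w^k`, `k ≤ d`, the series `(1+4u)^(d-1) h^k = (-1)^k u^k (1+4u)^(d-1-k)` is a
polynomial of degree `d - 1` unless `k = d`, where it is `(-1)^d u^d (1+4u)⁻¹`. -/

open PowerSeries Finset

/-- Composition (substitution) `g(h(u))` of formal power series over `ℚ`; this is the
usual substitution whenever `h` has zero constant term (the coefficient of `uⁿ` in
`g(h)` is `∑_{k ≤ n} gₖ · [uⁿ](hᵏ)`, a finite sum since `[uⁿ](hᵏ) = 0` for `k > n`). -/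
noncomputable def comp (g h : PowerSeries ℚ) : PowerSeries ℚ :=
  PowerSeries.mk fun n =>
    ∑ k ∈ Finset.range (n + 1), PowerSeries.coeff (R := ℚ) k g * PowerSeries.coeff (R := ℚ) n (h ^ k)

lemma coeff_mul_comp_of_X_dvd (f g : ℚ⟦X⟧) {h : ℚ⟦X⟧} (hh : X ∣ h) (d : ℕ) :
    coeff d (f * comp g h) = ∑ k ∈ range (d + 1), coeff k g * coeff d (f * h ^ k) := by
  have hvanish : ∀ k j, j < k → coeff j (h ^ k) = 0 := fun k _ hj =>
    X_pow_dvd_iff.mp (pow_dvd_pow_of_dvd hh k) _ hj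
  simp_rw [coeff_mul, mul_sum]
  rw [sum_comm]
  refine sum_congr rfl fun p hp => ?_
  have hp2 : p.2 ≤ d := by have := mem_antidiagonal.mp hp; omega
  rw [comp, coeff_mk, mul_sum]
  refine (sum_subset (range_subset_range.mpr (by omega)) fun k _ hk => ?_).trans
    (sum_congr rfl fun k _ => by ring)
  rw [hvanish k p.2 (by simp only [mem_range] at hk; omega), mul_zero, mul_zero]

section

variable {K : Type*} [Field K]

lemma coeff_one_add_C_mul_X_pow_of_lt (a : K) {m n : ℕ} (h : m < n) :
    coeff n ((1 + C a * X) ^ m) = 0 := by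
  induction m generalizing n with
  | zero => rw [pow_zero, coeff_one, if_neg (by omega)]
  | succ m ih =>
    obtain ⟨n, rfl⟩ : ∃ n', n = n' + 1 := ⟨n - 1, by omega⟩
    rw [pow_succ, mul_add, mul_one, map_add, ih (by omega), mul_left_comm, coeff_C_mul,
      mul_comm, coeff_succ_mul_X, ih (by omega), zero_mul, add_zero]

lemma coeff_one_add_C_mul_X_pow_mul_inv (a : K) (m : ℕ) :
    coeff m ((1 + C a * X) ^ m * (1 + C a * X)⁻¹) = if m = 0 then 1 else 0 := by
  have hunit : (1 + C a * X) * (1 + C a * X)⁻¹ = 1 := PowerSeries.mul_inv_cancel _ (by simp)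
  cases m with
  | zero => simp [constantCoeff_inv]
  | succ m =>
    rw [pow_succ, mul_assoc, hunit, mul_one, coeff_one_add_C_mul_X_pow_of_lt a (by omega),
      if_neg (by omega)]

lemma pow_mul_inv_mul_neg_X_mul_inv_pow {A : K⟦X⟧} (hA : constantCoeff A ≠ 0) {k d : ℕ}
    (hkd : k ≤ d) :
    A ^ d * A⁻¹ * (-(X * A⁻¹)) ^ k = (-1) ^ k * (X ^ k * (A ^ (d - k) * A⁻¹)) := by
  have hunit : (A * A⁻¹) ^ k = 1 := by rw [PowerSeries.mul_inv_cancel A hA, one_pow]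
  obtain ⟨m, rfl⟩ := Nat.exists_eq_add_of_le hkd
  rw [Nat.add_sub_cancel_left]
  linear_combination ((-1) ^ k * X ^ k * A ^ m * A⁻¹) * hunit

lemma coeff_one_add_C_mul_X_pow_mul_inv_mul_neg_X_mul_inv_pow (a : K) {k d : ℕ}
    (hkd : k ≤ d) :
    coeff d ((1 + C a * X) ^ d * (1 + C a * X)⁻¹ * (-(X * (1 + C a * X)⁻¹)) ^ k) =
      if k = d then (-1) ^ d else 0 := by
  have hsign : ((-1) ^ k : K⟦X⟧) = C ((-1) ^ k) := by simp
  rw [pow_mul_inv_mul_neg_X_mul_inv_pow (by simp) hkd, hsign, coeff_C_mul, coeff_X_pow_mul',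
    if_pos hkd, coeff_one_add_C_mul_X_pow_mul_inv]
  rcases hkd.eq_or_lt with rfl | hlt
  · simp
  · simp [hlt.ne, Nat.sub_ne_zero_of_lt hlt]

end

/-- For any formal power series `g ∈ ℚ⟦w⟧` and any integer `d ≥ 0`, the coefficient of
`w^d` in `g(w)` equals `(-1)^d` times the coefficient of `u^d` in
`(1+4u)^{d-1} · g(-u·(1+4u)⁻¹)`, where `(1+4u)^{d-1}` denotes the `(d-1)`-st power of
the unit `1+4u` (its inverse when `d = 0`), written here as `(1+4u)^d·(1+4u)⁻¹`. -/
theorem statement8 (g : PowerSeries ℚ) (d : ℕ) :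
    PowerSeries.coeff (R := ℚ) d g =
      (-1 : ℚ) ^ d * PowerSeries.coeff (R := ℚ) d
        ((1 + 4 * PowerSeries.X) ^ d * (1 + 4 * PowerSeries.X)⁻¹ *
          comp g (-(PowerSeries.X * (1 + 4 * PowerSeries.X)⁻¹))) := by
  have hX : X ∣ -(X * (1 + 4 * X : ℚ⟦X⟧)⁻¹) := (dvd_mul_right _ _).neg_right
  rw [coeff_mul_comp_of_X_dvd _ _ hX, ← map_ofNat C 4, sum_congr rfl fun k hk => by
    rw [coeff_one_add_C_mul_X_pow_mul_inv_mul_neg_X_mul_inv_pow _ (mem_range_succ_iff.mp hk)]]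
  simp only [mul_ite, mul_zero, sum_ite_eq', mem_range, lt_add_one, if_true]
  rw [mul_left_comm, ← mul_pow]
  norm_num
end

section
/- For every integer k ≥ 1, 10·q_{k,k−1} = (k+1)·q_{k,k}. -/
/-!
Since `q k j = 0` for `k < j`, the convolution in the recursion collapses on the diagonal
`d n = q n n` and the subdiagonal `e n = q (n + 1) n` to sums over `i + j = n`:
`d (n+1) = (6n+4) d n + ∑ d i d j` and `e (n+1) = 6(n+1) e n + (n+2) d (n+1) + 2 ∑ e i d j`.
By strong induction, substituting `10 e i = (i+2) d (i+1)` into the second recurrence and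
symmetrising `2 ∑ (i+1) d i d j = (n+2) ∑ d i d j` turns `10 e (n+1)` into `n+3` times the first.
-/

open Finset

theorem two_mul_sum_antidiagonal_fst_add_one_mul {R : Type*} [CommSemiring R] (a : ℕ → R)
    (n : ℕ) :
    2 * ∑ p ∈ antidiagonal n, ((p.1 : R) + 1) * (a p.1 * a p.2)
      = ((n : R) + 2) * ∑ p ∈ antidiagonal n, a p.1 * a p.2 := by
  have hswap : ∑ p ∈ antidiagonal n, ((p.1 : R) + 1) * (a p.1 * a p.2)
      = ∑ p ∈ antidiagonal n, ((p.2 : R) + 1) * (a p.1 * a p.2) := by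
    rw [← Nat.sum_antidiagonal_swap (f := fun p => ((p.1 : R) + 1) * (a p.1 * a p.2))]
    exact sum_congr rfl fun p _ => by simp only [Prod.fst_swap, Prod.snd_swap]; ring
  rw [two_mul]
  nth_rewrite 2 [hswap]
  rw [← sum_add_distrib, mul_sum]
  refine sum_congr rfl fun p hp => ?_
  have hn : ((p.1 + p.2 : ℕ) : R) = n := congrArg _ (mem_antidiagonal.mp hp)
  push_cast at hn
  rw [← hn]
  ring

theorem ten_mul_eq_of_recurrences {R : Type*} [CommRing R] {d e : ℕ → R} (hd0 : d 0 = 1) (he0 : e 0 = 1)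
    (hd : ∀ n : ℕ, d (n + 1) = (6 * n + 4) * d n + ∑ p ∈ antidiagonal n, d p.1 * d p.2)
    (he : ∀ n : ℕ, e (n + 1) = 6 * (n + 1) * e n + (n + 2) * d (n + 1)
      + 2 * ∑ p ∈ antidiagonal n, e p.1 * d p.2)
    (n : ℕ) : 10 * e n = (n + 2) * d (n + 1) := by
  induction n using Nat.strong_induction_on with
  | _ n ih =>
  cases n with
  | zero =>
    norm_num [hd 0, he0, hd0]
  | succ n =>
    have hconv : 10 * ∑ p ∈ antidiagonal n, e p.1 * d p.2
        = ∑ p ∈ antidiagonal n, ((p.1 : R) + 2) * (d (p.1 + 1) * d p.2) := by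
      rw [mul_sum]
      refine sum_congr rfl fun p hp => ?_
      have hp1 : p.1 < n + 1 := by have := mem_antidiagonal.mp hp; omega
      rw [← mul_assoc, ← mul_assoc, ih p.1 hp1]
    have hsym := two_mul_sum_antidiagonal_fst_add_one_mul d (n + 1)
    rw [Nat.sum_antidiagonal_succ] at hsym
    simp only [Nat.cast_zero, Nat.cast_add, Nat.cast_one, zero_add, one_mul, add_assoc,
      one_add_one_eq_two] at hsym
    rw [he n, hd (n + 1)]
    push_cast
    linear_combination 6 * ((n : R) + 1) * ih n n.lt_succ_self + 2 * hconv + hsym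
      - 2 * d (n + 1) * hd0

namespace IsQ

variable {q : ℕ → ℕ → ℤ}

theorem eq_zero_of_lt (hq : IsQ q) {k j : ℕ} (h : k < j) : q k j = 0 :=
  hq.2.1 k j h

theorem one_zero (hq : IsQ q) : q 1 0 = 1 := by
  rw [hq.2.2 1 0 le_rfl (Nat.zero_le 1)]
  simp [hq.1]

theorem diag_succ (hq : IsQ q) (n : ℕ) :
    q (n + 1) (n + 1) = (6 * n + 4) * q n n + ∑ p ∈ antidiagonal n, q p.1 p.1 * q p.2 p.2 := by
  have hconv : ∀ m ∈ range (n + 1),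
      ∑ l ∈ range (n + 1), q m l * q (n - m) (n - l) = q m m * q (n - m) (n - m) := by
    intro m hm
    refine sum_eq_single_of_mem m hm fun l _ hlm => ?_
    rcases hlm.lt_or_gt with h | h
    · have hm := mem_range.mp hm
      rw [hq.eq_zero_of_lt (k := n - m) (j := n - l) (by omega), mul_zero]
    · rw [hq.eq_zero_of_lt h, zero_mul]
  rw [hq.2.2 (n + 1) (n + 1) (by omega) le_rfl, if_neg n.succ_ne_zero]
  simp only [Nat.add_sub_cancel]
  rw [hq.eq_zero_of_lt n.lt_succ_self, sum_congr rfl hconv,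
    Nat.sum_antidiagonal_eq_sum_range_succ (fun i j => q i i * q j j)]
  push_cast
  ring

theorem subdiag_succ (hq : IsQ q) (n : ℕ) :
    q (n + 2) (n + 1) = 6 * (n + 1) * q (n + 1) n + (n + 2) * q (n + 1) (n + 1)
      + 2 * ∑ p ∈ antidiagonal n, q (p.1 + 1) p.1 * q p.2 p.2 := by
  have hconv : ∀ l ∈ range (n + 1), ∑ m ∈ range (n + 2), q m l * q (n + 1 - m) (n - l)
      = q l l * q (n - l + 1) (n - l) + q (l + 1) l * q (n - l) (n - l) := by
    intro l hl
    have hl := mem_range.mp hl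
    rw [sum_eq_add_of_mem l (l + 1) (mem_range.mpr (by omega)) (mem_range.mpr (by omega))
      (by omega), show n + 1 - l = n - l + 1 by omega, show n + 1 - (l + 1) = n - l by omega]
    intro m hm hml
    rcases Nat.lt_or_gt_of_ne hml.1 with h | h
    · rw [hq.eq_zero_of_lt h, zero_mul]
    · have hm := mem_range.mp hm
      rw [hq.eq_zero_of_lt (k := n + 1 - m) (j := n - l) (by omega), mul_zero]
  have hswap : ∑ p ∈ antidiagonal n, q p.1 p.1 * q (p.2 + 1) p.2
      = ∑ p ∈ antidiagonal n, q (p.1 + 1) p.1 * q p.2 p.2 := by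
    rw [← Nat.sum_antidiagonal_swap (f := fun p => q (p.1 + 1) p.1 * q p.2 p.2)]
    exact sum_congr rfl fun p _ => mul_comm _ _
  rw [hq.2.2 (n + 2) (n + 1) (by omega) (by omega), if_neg n.succ_ne_zero,
    show n + 2 - 1 = n + 1 by omega]
  simp only [Nat.add_sub_cancel]
  rw [sum_comm, sum_congr rfl hconv, sum_add_distrib,
    ← Nat.sum_antidiagonal_eq_sum_range_succ (fun i j => q i i * q (j + 1) j),
    ← Nat.sum_antidiagonal_eq_sum_range_succ (fun i j => q (i + 1) i * q j j), hswap]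
  push_cast
  ring

end IsQ

/-- For every integer `k ≥ 1`, `10·q_{k,k-1} = (k+1)·q_{k,k}`. -/
theorem statement12 (q : ℕ → ℕ → ℤ) (hq : IsQ q) :
    ∀ k : ℕ, 1 ≤ k → 10 * q k (k - 1) = ((k : ℤ) + 1) * q k k := by
  intro k hk
  obtain ⟨n, rfl⟩ : ∃ n, k = n + 1 := ⟨k - 1, by omega⟩
  have h := ten_mul_eq_of_recurrences (d := fun n => q n n) (e := fun n => q (n + 1) n)
    hq.1 hq.one_zero hq.diag_succ hq.subdiag_succ n
  simp only [Nat.add_sub_cancel] at h ⊢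
  push_cast
  linear_combination h
end

section
/- The formal power series P(z) = Σ_{k≥0} (6k)!/((3k)!·(2k)!) · z^k/72^k is the unique formal power series in ℚ[[z]] with constant term 1 satisfying the linear differential equation 6·P′ = 5·P + 36z²·P″ + 72z·P′, where P′ and P″ denote the first and second formal derivatives. -/
/-!
On coefficients, `X * f'` and `X ^ 2 * f''` act on `zⁿ` by `n` and `n (n - 1)`, so the
differential equation says exactly `6 (n + 1) aₙ₊₁ = (6n + 1)(6n + 5) aₙ`. Since `6 (n + 1) ≠ 0`,
this recurrence determines the series from its constant term. The factorial quotients satisfy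
it: in `(6n + 6)! / (6n)! = (6n + 1) ⋯ (6n + 6)` the factors `6n + 2`, `6n + 3`, `6n + 4`, `6n + 6`
cancel against `(3n + 1)(3n + 2)(3n + 3)(2n + 1)(2n + 2) · 72` up to `6 (n + 1)`.
-/

open PowerSeries

namespace PowerSeries

variable {R : Type*} [CommRing R]

theorem coeff_ofNat_mul (m : ℕ) [m.AtLeastTwo] (f : R⟦X⟧) (n : ℕ) :
    coeff n ((ofNat(m) : R⟦X⟧) * f) = (ofNat(m) : R) * coeff n f := by
  rw [← map_ofNat C m, coeff_C_mul]

theorem coeff_X_mul_derivative (f : R⟦X⟧) (n : ℕ) :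
    coeff n (X * d⁄dX R f) = n * coeff n f := by
  cases n with
  | zero => simp
  | succ n => rw [coeff_succ_X_mul, coeff_derivative, mul_comm, Nat.cast_succ]

theorem coeff_X_sq_mul_derivative_derivative (f : R⟦X⟧) (n : ℕ) :
    coeff n (X ^ 2 * d⁄dX R (d⁄dX R f)) = n * (n - 1) * coeff n f := by
  rcases n with _ | _ | n
  · simp
  · simp [coeff_X_pow_mul']
  · rw [show n + 1 + 1 = n + 2 from rfl, coeff_X_pow_mul, coeff_derivative, coeff_derivative]
    push_cast
    ring

end PowerSeries

theorem ode_iff_coeff_recurrence {R : Type*} [CommRing R] (Q : R⟦X⟧) :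
    6 * d⁄dX R Q = 5 * Q + 36 * X ^ 2 * d⁄dX R (d⁄dX R Q) + 72 * X * d⁄dX R Q ↔
      ∀ n : ℕ, 6 * (n + 1) * coeff (n + 1) Q = (6 * n + 1) * (6 * n + 5) * coeff n Q := by
  rw [PowerSeries.ext_iff]
  refine forall_congr' fun n => ?_
  rw [map_add, map_add, mul_assoc (36 : R⟦X⟧), mul_assoc (72 : R⟦X⟧)]
  simp only [coeff_ofNat_mul, coeff_derivative, coeff_X_mul_derivative,
    coeff_X_sq_mul_derivative_derivative]
  constructor <;> intro h <;> linear_combination h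

theorem eq_of_forall_mul_succ_eq {M : Type*} [MonoidWithZero M] [IsLeftCancelMulZero M]
    {a b c d : ℕ → M} (hc : ∀ n, c n ≠ 0) (ha : ∀ n, c n * a (n + 1) = d n * a n)
    (hb : ∀ n, c n * b (n + 1) = d n * b n) (h0 : a 0 = b 0) : a = b := by
  funext n
  induction n with
  | zero => exact h0
  | succ n ih => exact mul_left_cancel₀ (hc n) ((ha n).trans (ih ▸ hb n).symm)

theorem six_mul_succ_mul_factorial_ratio_succ (n : ℕ) :
    6 * (n + 1) * ((6 * (n + 1)).factorial /
        ((3 * (n + 1)).factorial * (2 * (n + 1)).factorial * 72 ^ (n + 1)) : ℚ) =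
      (6 * n + 1) * (6 * n + 5) *
        ((6 * n).factorial / ((3 * n).factorial * (2 * n).factorial * 72 ^ n) : ℚ) := by
  rw [show 6 * (n + 1) = 6 * n + 5 + 1 by ring, show 3 * (n + 1) = 3 * n + 2 + 1 by ring,
    show 2 * (n + 1) = 2 * n + 1 + 1 by ring]
  simp only [Nat.factorial_succ]
  field_simp
  push_cast
  ring

/-- The formal power series `P(z) = ∑_{k≥0} (6k)!/((3k)!·(2k)!) · zᵏ/72ᵏ` is the unique
formal power series in `ℚ⟦z⟧` with constant term `1` satisfying the linear differential
equation `6·P′ = 5·P + 36z²·P″ + 72z·P′`. -/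
theorem statement15
    (P : PowerSeries ℚ)
    (hP : P = PowerSeries.mk fun k =>
      (Nat.factorial (6 * k) : ℚ) /
        ((Nat.factorial (3 * k) : ℚ) * (Nat.factorial (2 * k) : ℚ) * 72 ^ k)) :
    (PowerSeries.constantCoeff P = 1 ∧
      6 * d⁄dX ℚ P = 5 * P + 36 * PowerSeries.X ^ 2 * (d⁄dX ℚ (d⁄dX ℚ P)) +
        72 * PowerSeries.X * d⁄dX ℚ P) ∧
    ∀ Q : PowerSeries ℚ, PowerSeries.constantCoeff Q = 1 →
      6 * d⁄dX ℚ Q = 5 * Q + 36 * PowerSeries.X ^ 2 * (d⁄dX ℚ (d⁄dX ℚ Q)) +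
        72 * PowerSeries.X * d⁄dX ℚ Q →
      Q = P := by
  have hP0 : constantCoeff P = 1 := by simp [hP]
  have hPrec : ∀ n : ℕ,
      6 * (n + 1) * coeff (n + 1) P = (6 * n + 1) * (6 * n + 5) * coeff n P := by
    simpa only [hP, coeff_mk] using six_mul_succ_mul_factorial_ratio_succ
  refine ⟨⟨hP0, (ode_iff_coeff_recurrence P).2 hPrec⟩, fun Q hQ0 hQ => ?_⟩
  have hc : ∀ n : ℕ, (6 * (n + 1) : ℚ) ≠ 0 := fun n => by positivity
  ext n
  refine congrFun (eq_of_forall_mul_succ_eq (a := fun n => coeff n Q) (b := fun n => coeff n P)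
    hc ((ode_iff_coeff_recurrence Q).1 hQ) hPrec ?_) n
  simp only [coeff_zero_eq_constantCoeff_apply, hQ0, hP0]
end
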